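/- arXiv:2407.13898 — 3 statements merged into one kernel-verified Lean document; each statement's English description precedes it below -/
import Mathlib

section
/- For all real c > 0 and λ > 0, ∫₀^∞ log(1 + c·x) · λ e^{−λx} dx = e^{λ/c} · ∫_{λ/c}^∞ (e^{−t}/t) dt. -/
open MeasureTheory

theorem my_comp_add (g : ℝ → ℝ) (a d : ℝ) :
    (∫ x in Set.Ioi a, g (x + d)) = ∫ x in Set.Ioi (a + d), g x := by
  have h : MeasurePreserving (fun x : ℝ => x + d) volume volume :=
    measurePreserving_add_right volume d
  have he : MeasurableEmbedding (fun x : ℝ => x + d) :=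
    (Homeomorph.addRight d).measurableEmbedding
  have hs : (fun x : ℝ => x + d) ⁻¹' (Set.Ioi (a + d)) = Set.Ioi a := by
    ext x; simp
  rw [← hs]
  exact h.setIntegral_preimage_emb he g (Set.Ioi (a + d))


/-- `∫₀^∞ log(1 + c·x) · λ e^{−λx} dx = e^{λ/c} · ∫_{λ/c}^∞ e^{−t}/t dt`, the
right-hand side being the negative exponential integral `−Ei(−λ/c)` scaled by `e^{λ/c}`. -/
theorem stmt_4 (c l : ℝ) (hc : 0 < c) (hl : 0 < l) :
    ∫ x in Set.Ioi (0 : ℝ), Real.log (1 + c * x) * (l * Real.exp (-l * x))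
      = Real.exp (l / c) * ∫ t in Set.Ioi (l / c), Real.exp (-t) / t := by
  have hpos : ∀ x : ℝ, 0 ≤ x → (0:ℝ) < 1 + c * x := fun x hx => by nlinarith
  -- bound function
  have hbint : IntegrableOn (fun x => Real.exp (-(l/2) * x)) (Set.Ioi 0) :=
    exp_neg_integrableOn_Ioi 0 (by positivity)
  -- key pointwise estimate:  x * exp(-l x) ≤ (2/l) exp(-(l/2) x)  for x ≥ 0
  have hxexp : ∀ x : ℝ, 0 ≤ x → x * Real.exp (-l * x) ≤ (2/l) * Real.exp (-(l/2) * x) := by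
    intro x hx
    have h1 : (l/2) * x + 1 ≤ Real.exp ((l/2) * x) := Real.add_one_le_exp _
    have h2 : Real.exp ((l/2) * x) * Real.exp (-l * x) = Real.exp (-(l/2) * x) := by
      rw [← Real.exp_add]; ring_nf
    have h3 : (0:ℝ) < Real.exp (-l * x) := Real.exp_pos _
    have hxle : x ≤ (2/l) * Real.exp ((l/2) * x) := by
      rw [show (2/l) * Real.exp ((l/2) * x) = (2 * Real.exp ((l/2) * x)) / l by ring,
        le_div_iff₀ hl]
      nlinarith
    calc x * Real.exp (-l * x) ≤ (2/l) * Real.exp ((l/2) * x) * Real.exp (-l * x) :=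
          mul_le_mul_of_nonneg_right hxle h3.le
      _ = (2/l) * (Real.exp ((l/2) * x) * Real.exp (-l * x)) := by ring
      _ = (2/l) * Real.exp (-(l/2) * x) := by rw [h2]
  have hlog : ∀ x : ℝ, 0 ≤ x → Real.log (1 + c * x) ≤ c * x := by
    intro x hx
    have := Real.log_le_sub_one_of_pos (hpos x hx)
    linarith
  have hlog0 : ∀ x : ℝ, 0 ≤ x → 0 ≤ Real.log (1 + c * x) := by
    intro x hx
    apply Real.log_nonneg; nlinarith
  -- measurability
  have hcont1 : ContinuousOn (fun x => Real.log (1 + c * x)) (Set.Ioi 0) := by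
    apply ContinuousOn.log
    · exact (continuous_const.add (continuous_const.mul continuous_id)).continuousOn
    · intro x hx; exact (hpos x (le_of_lt hx)).ne'
  have hcont2 : ContinuousOn (fun x => c / (1 + c * x) * Real.exp (-l * x)) (Set.Ioi 0) := by
    apply ContinuousOn.mul
    · apply ContinuousOn.div continuousOn_const
        (continuous_const.add (continuous_const.mul continuous_id)).continuousOn
        (fun x hx => (hpos x (le_of_lt hx)).ne')
    · exact (Real.continuous_exp.comp (continuous_const.mul continuous_id)).continuousOn
  -- integrability of h1
  have ih1 : IntegrableOn (fun x => Real.log (1 + c * x) * (l * Real.exp (-l * x)))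
      (Set.Ioi 0) := by
    apply Integrable.mono' (hbint.const_mul (2*c))
    · have hce : Continuous (fun x : ℝ => l * Real.exp (-l * x)) :=
        continuous_const.mul (Real.continuous_exp.comp (continuous_const.mul continuous_id))
      exact ((hcont1.mul hce.continuousOn).aestronglyMeasurable measurableSet_Ioi)
    · filter_upwards [ae_restrict_mem measurableSet_Ioi] with x hx
      have hx0 : (0:ℝ) ≤ x := le_of_lt hx
      have h1 := hlog x hx0
      have h0 := hlog0 x hx0
      have h2 := hxexp x hx0
      have h3 : (0:ℝ) < Real.exp (-l * x) := Real.exp_pos _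
      rw [Real.norm_eq_abs, abs_of_nonneg (by positivity)]
      have : Real.log (1 + c * x) * (l * Real.exp (-l * x))
          ≤ c * x * (l * Real.exp (-l * x)) :=
        mul_le_mul_of_nonneg_right h1 (by positivity)
      calc Real.log (1 + c * x) * (l * Real.exp (-l * x))
          ≤ c * x * (l * Real.exp (-l * x)) := this
        _ = c * l * (x * Real.exp (-l * x)) := by ring
        _ ≤ c * l * ((2/l) * Real.exp (-(l/2) * x)) := by
            apply mul_le_mul_of_nonneg_left h2 (by positivity)
        _ = 2 * c * Real.exp (-(l/2) * x) := by field_simp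
  -- integrability of h2
  have ih2 : IntegrableOn (fun x => c / (1 + c * x) * Real.exp (-l * x)) (Set.Ioi 0) := by
    apply Integrable.mono' (hbint.const_mul c)
    · exact hcont2.aestronglyMeasurable measurableSet_Ioi
    · filter_upwards [ae_restrict_mem measurableSet_Ioi] with x hx
      have hx0 : (0:ℝ) ≤ x := le_of_lt hx
      have h1 : (0:ℝ) < 1 + c * x := hpos x hx0
      have h3 : (0:ℝ) < Real.exp (-l * x) := Real.exp_pos _
      rw [Real.norm_eq_abs, abs_of_nonneg (by positivity)]
      have hd : c / (1 + c * x) ≤ c := by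
        rw [div_le_iff₀ h1]; nlinarith [mul_nonneg (mul_nonneg hc.le hc.le) hx0]
      have he : Real.exp (-l * x) ≤ Real.exp (-(l/2) * x) := by
        apply Real.exp_le_exp.2; nlinarith
      calc c / (1 + c * x) * Real.exp (-l * x) ≤ c * Real.exp (-l * x) := by
            apply mul_le_mul_of_nonneg_right hd (le_of_lt h3)
        _ ≤ c * Real.exp (-(l/2) * x) := by
            apply mul_le_mul_of_nonneg_left he (le_of_lt hc)
  -- FTC step: ∫ F' = 0 where F x = -(log(1+cx) * exp(-lx))
  have hderiv : ∀ x ∈ Set.Ici (0:ℝ), HasDerivAt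
      (fun x => -(Real.log (1 + c * x) * Real.exp (-l * x)))
      (Real.log (1 + c * x) * (l * Real.exp (-l * x)) - c / (1 + c * x) * Real.exp (-l * x)) x := by
    intro x hx
    have h0 : HasDerivAt (fun y : ℝ => 1 + c * y) c x := by
      simpa using ((hasDerivAt_id x).const_mul c).const_add 1
    have hlogd : HasDerivAt (fun y => Real.log (1 + c * y)) (c / (1 + c * x)) x :=
      h0.log (hpos x hx).ne'
    have hexpd : HasDerivAt (fun y => Real.exp (-l * y)) (-l * Real.exp (-l * x)) x := by
      have hlin : HasDerivAt (fun y : ℝ => -l * y) (-l) x := by simpa using (hasDerivAt_id x).const_mul (-l)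
      simpa [mul_comm] using hlin.exp
    have := (hlogd.mul hexpd).neg
    refine this.congr_deriv ?_
    ring
  have hF0 : Filter.Tendsto (fun x => -(Real.log (1 + c * x) * Real.exp (-l * x)))
      Filter.atTop (nhds 0) := by
    rw [show (0:ℝ) = -0 by norm_num]
    apply Filter.Tendsto.neg
    have hup : Filter.Tendsto (fun x => (2*c/l) * Real.exp (-(l/2) * x)) Filter.atTop (nhds 0) := by
      rw [show (0:ℝ) = (2*c/l) * 0 by ring]
      apply Filter.Tendsto.const_mul
      apply Real.tendsto_exp_atBot.comp
      apply Filter.Tendsto.const_mul_atTop_of_neg (by linarith : -(l/2) < 0) Filter.tendsto_id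
    apply squeeze_zero' (g := fun x => (2*c/l) * Real.exp (-(l/2) * x))
    · filter_upwards [Filter.eventually_ge_atTop (0:ℝ)] with x hx
      exact mul_nonneg (hlog0 x hx) (Real.exp_pos _).le
    · filter_upwards [Filter.eventually_ge_atTop (0:ℝ)] with x hx
      calc Real.log (1 + c * x) * Real.exp (-l * x)
          ≤ c * x * Real.exp (-l * x) :=
            mul_le_mul_of_nonneg_right (hlog x hx) (Real.exp_pos _).le
        _ = c * (x * Real.exp (-l * x)) := by ring
        _ ≤ c * ((2/l) * Real.exp (-(l/2) * x)) :=
            mul_le_mul_of_nonneg_left (hxexp x hx) hc.le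
        _ = (2*c/l) * Real.exp (-(l/2) * x) := by ring
    · exact hup
  have hint : IntegrableOn (fun x => Real.log (1 + c * x) * (l * Real.exp (-l * x))
      - c / (1 + c * x) * Real.exp (-l * x)) (Set.Ioi 0) := ih1.sub ih2
  have hFTC := integral_Ioi_of_hasDerivAt_of_tendsto' hderiv hint hF0
  simp only [mul_zero, Real.log_one, zero_mul, neg_zero, mul_one, sub_zero,
    add_zero, Real.exp_zero] at hFTC
  -- hence ∫ h1 = ∫ h2
  have hkey : ∫ x in Set.Ioi (0:ℝ), Real.log (1 + c * x) * (l * Real.exp (-l * x))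
      = ∫ x in Set.Ioi (0:ℝ), c / (1 + c * x) * Real.exp (-l * x) := by
    have := integral_sub ih1 ih2
    rw [hFTC] at this
    linarith [this]
  rw [hkey]
  -- change of variables on the RHS
  have hT : (∫ t in Set.Ioi (l/c), Real.exp (-t) / t)
      = ∫ x in Set.Ioi (0:ℝ), Real.exp (-(x + l/c)) / (x + l/c) := by
    rw [my_comp_add (fun t => Real.exp (-t) / t) 0 (l/c), zero_add]
  have hS : (∫ x in Set.Ioi (0:ℝ), Real.exp (-(x + l/c)) / (x + l/c))
      = l * ∫ x in Set.Ioi (0:ℝ), Real.exp (-(l * x + l/c)) / (l * x + l/c) := by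
    have := integral_comp_mul_left_Ioi (fun x => Real.exp (-(x + l/c)) / (x + l/c)) 0 hl
    rw [mul_zero] at this
    rw [this, smul_eq_mul, ← mul_assoc, mul_inv_cancel₀ hl.ne', one_mul]
  rw [hT, hS, ← mul_assoc, ← MeasureTheory.integral_const_mul]
  apply setIntegral_congr_fun measurableSet_Ioi
  intro x hx
  have hx0 : (0:ℝ) < x := hx
  have h1 : (0:ℝ) < 1 + c * x := hpos x hx0.le
  have h2 : (0:ℝ) < l * x + l / c := by positivity
  have hexp : Real.exp (l/c) * Real.exp (-(l * x + l/c)) = Real.exp (-l * x) := by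
    rw [← Real.exp_add]; ring_nf
  show c / (1 + c * x) * Real.exp (-l * x)
      = Real.exp (l / c) * l * (Real.exp (-(l * x + l / c)) / (l * x + l / c))
  have hstep : Real.exp (l/c) * l * (Real.exp (-(l*x+l/c)) / (l*x+l/c))
      = (Real.exp (l/c) * Real.exp (-(l*x+l/c))) * (l / (l*x+l/c)) := by ring
  rw [hstep, hexp]
  have hfrac : l / (l*x+l/c) = c / (1 + c*x) := by
    rw [div_eq_div_iff h2.ne' h1.ne']
    field_simp
    ring
  rw [hfrac]
  ring
end

section
/- For every real x > 0, ∫_x^∞ (e^{−t}/t) dt > (1/2) · e^{−x} · log(1 + 2/x). Equivalently, in terms of the exponential integral Ei(−x) = −∫_x^∞ e^{−t}/t dt, one has Ei(−x) < −(1/2) e^{−x} log(1 + 2/x). -/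
open MeasureTheory Set Filter Real

lemma log_lt_aux {u : ℝ} (hu : 0 < u) :
    Real.log (1 + u) < u * (u + 2) / (2 * (u + 1)) := by
  set φ : ℝ → ℝ := fun u => u * (u + 2) / (2 * (u + 1)) - Real.log (1 + u) with hφ
  have hder : ∀ v : ℝ, 0 ≤ v → HasDerivAt φ (v ^ 2 / (2 * (v + 1) ^ 2)) v := by
    intro v hv
    have h1 : (1 : ℝ) + v ≠ 0 := by positivity
    have h2 : (2 : ℝ) * (v + 1) ≠ 0 := by positivity
    have hnum : HasDerivAt (fun v : ℝ => v * (v + 2)) (2 * v + 2) v := by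
      have := (hasDerivAt_id v).mul ((hasDerivAt_id v).add_const 2)
      exact this.congr_deriv (by simp only [id]; ring)
    have hden : HasDerivAt (fun v : ℝ => 2 * (v + 1)) 2 v := by
      have := ((hasDerivAt_id v).add_const 1).const_mul 2
      exact this.congr_deriv (by ring)
    have hlog : HasDerivAt (fun v : ℝ => Real.log (1 + v)) (1 / (1 + v)) v := by
      have := (Real.hasDerivAt_log h1).comp v ((hasDerivAt_id v).const_add 1)
      exact this.congr_deriv (by simp)
    have := (hnum.div hden h2).sub hlog
    refine this.congr_deriv ?_
    field_simp
    ring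
  have hmono : StrictMonoOn φ (Ici 0) := by
    apply strictMonoOn_of_deriv_pos (convex_Ici 0)
    · exact fun v hv => ((hder v hv).continuousAt).continuousWithinAt
    · intro v hv
      rw [interior_Ici] at hv
      have hv' : 0 < v := hv
      rw [(hder v (le_of_lt hv')).deriv]
      positivity
  have h0 : φ 0 = 0 := by simp [hφ]
  have := hmono (self_mem_Ici) (le_of_lt hu : (0:ℝ) ≤ u) hu
  rw [h0] at this
  simp only [hφ] at this
  linarith

lemma key_ineq {t : ℝ} (ht : 0 < t) :
    1 / 2 * Real.log (1 + 2 / t) + 1 / (t * (t + 2)) < 1 / t := by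
  have hu : 0 < 2 / t := by positivity
  have h := log_lt_aux hu
  have heq : (2 / t) * (2 / t + 2) / (2 * (2 / t + 1)) = 2 * (t + 1) / (t * (t + 2)) := by
    field_simp
    ring
  rw [heq] at h
  have h2 : 1 / t - 1 / (t * (t + 2)) = (t + 1) / (t * (t + 2)) := by
    field_simp; ring
  have h3 : 2 * (t + 1) / (t * (t + 2)) = 2 * ((t + 1) / (t * (t + 2))) := by ring
  rw [h3] at h
  linarith

/-- Lower bound on the negative exponential integral: for `x > 0`,
`∫_x^∞ e^{−t}/t dt > (1/2) e^{−x} log(1 + 2/x)`, i.e. `Ei(−x) < −(1/2) e^{−x} log(1 + 2/x)`. -/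
theorem stmt_5 (x : ℝ) (hx : 0 < x) :
    1 / 2 * Real.exp (-x) * Real.log (1 + 2 / x)
      < ∫ t in Set.Ioi x, Real.exp (-t) / t := by
  set f : ℝ → ℝ := fun t => Real.exp (-t) / t with hf
  set h : ℝ → ℝ := fun t => Real.exp (-t) * (1 / 2 * Real.log (1 + 2 / t) + 1 / (t * (t + 2)))
    with hh
  set G : ℝ → ℝ := fun t => -(1 / 2 * Real.exp (-t) * Real.log (1 + 2 / t)) with hG
  -- pointwise strict inequality
  have hlt : ∀ t ∈ Ioi x, h t < f t := by
    intro t ht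
    have ht0 : 0 < t := hx.trans ht
    have hkey := key_ineq ht0
    have hexp : 0 < Real.exp (-t) := Real.exp_pos _
    have hcalc : Real.exp (-t) * (1 / 2 * Real.log (1 + 2 / t) + 1 / (t * (t + 2)))
        < Real.exp (-t) / t := by
      have h2 := (mul_lt_mul_iff_right₀ hexp).2 hkey
      rw [mul_one_div] at h2
      exact h2
    exact hcalc
  -- nonnegativity of h
  have hpos : ∀ t ∈ Ioi x, 0 ≤ h t := by
    intro t ht
    have ht0 : 0 < t := hx.trans ht
    have hlog : 0 ≤ Real.log (1 + 2 / t) := Real.log_nonneg (by nlinarith [div_pos two_pos ht0])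
    have : 0 < 1 / (t * (t + 2)) := by positivity
    have := Real.exp_pos (-t)
    positivity
  -- integrability of f
  have hfm : AEStronglyMeasurable f (volume.restrict (Ioi x)) := by
    apply ContinuousOn.aestronglyMeasurable _ measurableSet_Ioi
    exact (Real.continuous_exp.comp continuous_neg).continuousOn.div continuousOn_id
      (fun t ht => ne_of_gt (hx.trans ht))
  have hfint : IntegrableOn f (Ioi x) := by
    have hbase : IntegrableOn (fun t : ℝ => Real.exp (-1 * t)) (Ioi x) :=
      exp_neg_integrableOn_Ioi x one_pos
    refine Integrable.mono' (hbase.const_mul (1 / x)) hfm ?_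
    filter_upwards [ae_restrict_mem measurableSet_Ioi] with t ht
    have ht0 : 0 < t := hx.trans ht
    have : Real.exp (-t) / t ≤ Real.exp (-t) / x :=
      div_le_div_of_nonneg_left (Real.exp_pos _).le hx (le_of_lt ht)
    simp only [Real.norm_eq_abs]
    rw [abs_of_nonneg (by positivity : (0:ℝ) ≤ Real.exp (-t) / t)]
    calc Real.exp (-t) / t ≤ Real.exp (-t) / x := this
      _ = 1 / x * Real.exp (-1 * t) := by rw [neg_one_mul]; ring
  -- integrability of h
  have hhm : AEStronglyMeasurable h (volume.restrict (Ioi x)) := by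
    apply ContinuousOn.aestronglyMeasurable _ measurableSet_Ioi
    intro t ht
    have ht0 : 0 < t := hx.trans ht
    have h1 : (1 : ℝ) + 2 / t ≠ 0 := by positivity
    apply ContinuousAt.continuousWithinAt
    have clog : ContinuousAt (fun t : ℝ => Real.log (1 + 2 / t)) t :=
      (continuousAt_const.add (continuousAt_const.div continuousAt_id (ne_of_gt ht0))).log h1
    have cden : ContinuousAt (fun t : ℝ => 1 / (t * (t + 2))) t := by
      apply continuousAt_const.div
      · exact continuousAt_id.mul (continuousAt_id.add continuousAt_const)
      · positivity
    exact (Real.continuous_exp.continuousAt.comp continuousAt_neg).mul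
      ((clog.const_mul _).add cden)
  have hhint : IntegrableOn h (Ioi x) := by
    refine Integrable.mono' hfint hhm ?_
    filter_upwards [ae_restrict_mem measurableSet_Ioi] with t ht
    rw [Real.norm_eq_abs, abs_of_nonneg (hpos t ht)]
    exact le_of_lt (hlt t ht)
  -- FTC
  have hderiv : ∀ t ∈ Ici x, HasDerivAt G (h t) t := by
    intro t ht
    have ht0 : 0 < t := lt_of_lt_of_le hx ht
    have h1 : (1 : ℝ) + 2 / t ≠ 0 := by positivity
    have hexp : HasDerivAt (fun t : ℝ => Real.exp (-t)) (-Real.exp (-t)) t := by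
      have := (Real.hasDerivAt_exp (-t)).comp t (hasDerivAt_neg t)
      exact this.congr_deriv (by ring)
    have hinner : HasDerivAt (fun t : ℝ => 1 + 2 / t) (-2 / t ^ 2) t := by
      have h' := ((hasDerivAt_inv (ne_of_gt ht0)).const_mul 2).const_add 1
      simp only [div_eq_mul_inv]
      refine h'.congr_deriv ?_
      field_simp
    have hlog : HasDerivAt (fun t : ℝ => Real.log (1 + 2 / t))
        ((1 + 2 / t)⁻¹ * (-2 / t ^ 2)) t :=
      by exact (Real.hasDerivAt_log h1).comp t hinner
    have hprod := ((hexp.const_mul (1/2 : ℝ)).mul hlog).neg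
    refine hprod.congr_deriv ?_
    simp only [hh]
    have ht2 : t + 2 ≠ 0 := by positivity
    have : (1 + 2 / t)⁻¹ * (-2 / t ^ 2) = -2 / (t * (t + 2)) := by
      rw [inv_mul_eq_div]
      field_simp
    rw [this]
    ring
  have htend : Tendsto G atTop (nhds 0) := by
    have he : Tendsto (fun t : ℝ => Real.exp (-t)) atTop (nhds 0) := by
      exact Real.tendsto_exp_neg_atTop_nhds_zero
    have hl : Tendsto (fun t : ℝ => Real.log (1 + 2 / t)) atTop (nhds 0) := by
      have h2 : Tendsto (fun t : ℝ => 1 + 2 / t) atTop (nhds 1) := by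
        have h3 : Tendsto (fun t : ℝ => 2 / t) atTop (nhds 0) :=
          Tendsto.div_atTop tendsto_const_nhds tendsto_id
        simpa using (tendsto_const_nhds (x := (1:ℝ))).add h3
      have := (Real.continuousAt_log (by norm_num : (1:ℝ) ≠ 0)).tendsto.comp h2
      rw [Real.log_one] at this
      exact this
    have key := ((he.const_mul (1/2 : ℝ)).mul hl).neg
    simp only [mul_zero, neg_zero] at key
    exact key
  have hint_eq : ∫ t in Ioi x, h t = 0 - G x :=
    integral_Ioi_of_hasDerivAt_of_tendsto' hderiv hhint htend
  have hGx : 0 - G x = 1 / 2 * Real.exp (-x) * Real.log (1 + 2 / x) := by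
    simp [hG]
  -- strict integral inequality
  have hd : IntegrableOn (fun t => f t - h t) (Ioi x) := hfint.sub hhint
  have hposint : 0 < ∫ t in Ioi x, (f t - h t) := by
    rw [setIntegral_pos_iff_support_of_nonneg_ae]
    · have hsub : Ioi x ⊆ (Function.support fun t => f t - h t) ∩ Ioi x :=
        fun t ht => ⟨ne_of_gt (sub_pos.2 (hlt t ht)), ht⟩
      have hv : (0:ENNReal) < volume (Ioi x) := by
        rw [Real.volume_Ioi]; exact ENNReal.zero_lt_top
      exact lt_of_lt_of_le hv (measure_mono hsub)
    · filter_upwards [ae_restrict_mem measurableSet_Ioi] with t ht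
      exact le_of_lt (sub_pos.2 (hlt t ht))
    · exact hd
  rw [integral_sub hfint hhint] at hposint
  have : 1 / 2 * Real.exp (-x) * Real.log (1 + 2 / x) = ∫ t in Ioi x, h t := by
    rw [hint_eq, hGx]
  rw [this]
  linarith
end

section
/- For each n ∈ ℕ let μ_n and ν_n be probability measures on ℝ (the laws of a single observation under H0 and H1 respectively) with means m0(n) and m1(n) and variances v0(n), v1(n). Assume m0(n) < m1(n) for all n, that v0(n) and v1(n) are bounded above by a constant V < ∞ uniformly in n, and that √n · (m1(n) − m0(n)) → ∞ as n → ∞. Let A_n ⊆ ℝ^n be the event { (x_1,…,x_n) : (1/n) Σ_{i=1}^n x_i ≥ (m0(n)+m1(n))/2 }. Then μ_n^{⊗n}(A_n) → 0 and ν_n^{⊗n}(A_nᶜ) → 0 as n → ∞; i.e., the sample-mean threshold test drives both error probabilities to zero. -/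
open MeasureTheory Filter Finset

lemma aux_var_sum (μ : Measure ℝ) [IsProbabilityMeasure μ]
    (g : ℝ → ℝ) (hg : Integrable g μ) (hg2 : Integrable (fun y => g y * g y) μ)
    (hgmean : ∫ y, g y ∂μ = 0) (n : ℕ) :
    Integrable (fun x : Fin n → ℝ => (∑ i, g (x i)) ^ 2) (Measure.pi fun _ => μ) ∧
    ∫ x : Fin n → ℝ, (∑ i, g (x i)) ^ 2 ∂(Measure.pi fun _ => μ)
      = n * ∫ y, g y * g y ∂μ := by
  classical
  letI : MeasureSpace ℝ := ⟨μ⟩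
  haveI : SigmaFinite (volume : Measure ℝ) := (inferInstance : SigmaFinite μ)
  haveI hPvol : IsProbabilityMeasure (volume : Measure ℝ) :=
    (inferInstance : IsProbabilityMeasure μ)
  have hvol : (Measure.pi fun _ : Fin n => μ) = (volume : Measure (Fin n → ℝ)) := rfl
  set v : ℝ := ∫ y, g y * g y ∂μ with hv
  have key : ∀ i j : Fin n,
      Integrable (fun x : Fin n → ℝ => g (x i) * g (x j)) volume ∧
      ∫ x : Fin n → ℝ, g (x i) * g (x j) = (if i = j then v else 0) := by
    intro i j
    set f : Fin n → ℝ → ℝ :=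
      fun k y => (if k = i then g y else 1) * (if k = j then g y else 1) with hf
    have hprod : ∀ x : Fin n → ℝ, (∏ k, f k (x k)) = g (x i) * g (x j) := by
      intro x
      simp only [hf, Finset.prod_mul_distrib]
      rw [Finset.prod_ite_eq' univ i (fun k => g (x k)),
        Finset.prod_ite_eq' univ j (fun k => g (x k))]
      simp
    have hfint : ∀ k, Integrable (f k) volume := by
      intro k
      by_cases hki : k = i
      · by_cases hkj : k = j
        · have h : f k = fun y => g y * g y := by
            funext y; simp only [hf]; rw [if_pos hki, if_pos hkj]
          rw [h]; exact hg2
        · have h : f k = g := by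
            funext y; simp only [hf]; rw [if_pos hki, if_neg hkj, mul_one]
          rw [h]; exact hg
      · by_cases hkj : k = j
        · have h : f k = g := by
            funext y; simp only [hf]; rw [if_neg hki, if_pos hkj, one_mul]
          rw [h]; exact hg
        · have h : f k = fun _ => (1 : ℝ) := by
            funext y; simp only [hf]; rw [if_neg hki, if_neg hkj, mul_one]
          rw [h]; exact integrable_const 1
    have heqf : (fun x : Fin n → ℝ => g (x i) * g (x j))
        = fun x => ∏ k, f k (x k) := funext fun x => (hprod x).symm
    constructor
    · rw [heqf]; exact Integrable.fintype_prod_dep hfint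
    · rw [heqf]; erw [MeasureTheory.integral_fintype_prod_eq_prod (μ := fun _ => (volume : Measure ℝ)) f]
      by_cases hij : i = j
      · subst hij
        have hik : ∀ k, (∫ y, f k y) = (if k = i then v else 1) := by
          intro k
          by_cases hki : k = i
          · have h : f k = fun y => g y * g y := by
              funext y; simp only [hf]; rw [if_pos hki]
            rw [h, if_pos hki]; rfl
          · have h : f k = fun _ => (1 : ℝ) := by
              funext y; simp only [hf]; rw [if_neg hki, mul_one]
            rw [h, if_neg hki]
            simp
        simp only [hik]
        rw [Finset.prod_ite_eq' univ i (fun _ => v)]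
        simp
      · have h0 : (∫ y, f i y) = 0 := by
          have h : f i = g := by
            funext y; simp [hf, hij]
          rw [h]; exact hgmean
        rw [Finset.prod_eq_zero (mem_univ i) h0, if_neg hij]
  have hsq : ∀ x : Fin n → ℝ, (∑ i, g (x i)) ^ 2 = ∑ i, ∑ j, g (x i) * g (x j) := by
    intro x; rw [sq, Finset.sum_mul_sum]
  constructor
  · rw [hvol]
    have h : (fun x : Fin n → ℝ => (∑ i, g (x i)) ^ 2)
        = fun x => ∑ i, ∑ j, g (x i) * g (x j) := funext hsq
    rw [h]
    exact integrable_finset_sum _ fun i _ => integrable_finset_sum _ fun j _ => (key i j).1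
  calc ∫ x : Fin n → ℝ, (∑ i, g (x i)) ^ 2 ∂(Measure.pi fun _ => μ)
      = ∫ x : Fin n → ℝ, ∑ i, ∑ j, g (x i) * g (x j) := by
        rw [hvol]; exact integral_congr_ae (Filter.Eventually.of_forall fun x => hsq x)
    _ = ∑ i, ∑ j, ∫ x : Fin n → ℝ, g (x i) * g (x j) := by
        rw [integral_finset_sum _ fun i _ => integrable_finset_sum _ fun j _ => (key i j).1]
        exact Finset.sum_congr rfl fun i _ =>
          integral_finset_sum _ fun j _ => (key i j).1
    _ = ∑ i : Fin n, ∑ j : Fin n, (if i = j then v else 0) :=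
        Finset.sum_congr rfl fun i _ => Finset.sum_congr rfl fun j _ => (key i j).2
    _ = ∑ i : Fin n, v := Finset.sum_congr rfl fun i _ => by simp
    _ = n * v := by simp [mul_comm]

lemma aux_cheb (μ : Measure ℝ) [IsProbabilityMeasure μ]
    (h1 : Integrable (fun x => x) μ) (h2 : Integrable (fun x => x ^ 2) μ)
    (m : ℝ) (hm : m = ∫ x, x ∂μ)
    (n : ℕ) (hn : 0 < n) (t : ℝ) (ht : 0 < t) :
    Measure.pi (fun _ : Fin n => μ) {x | t ≤ |(∑ i, x i) / n - m|}
      ≤ ENNReal.ofReal ((∫ x, (x - m) ^ 2 ∂μ) / (n * t ^ 2)) := by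
  set g : ℝ → ℝ := fun y => y - m with hgdef
  have hg : Integrable g μ := h1.sub (integrable_const m)
  have hg2 : Integrable (fun y => g y * g y) μ := by
    have h : (fun y => g y * g y) = fun y => y ^ 2 - (2 * m) * y + m ^ 2 := by
      funext y; simp only [hgdef]; ring
    rw [h]
    exact (h2.sub (h1.const_mul (2 * m))).add (integrable_const _)
  have hgmean : ∫ y, g y ∂μ = 0 := by
    rw [hgdef]
    rw [integral_sub h1 (integrable_const m), integral_const, probReal_univ, ← hm]
    simp
  set P := Measure.pi fun _ : Fin n => μ with hP
  haveI : IsProbabilityMeasure P := by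
    rw [hP]; infer_instance
  have hvv : ∫ x, (x - m) ^ 2 ∂μ = ∫ y, g y * g y ∂μ := by
    apply integral_congr_ae; filter_upwards with y; simp [hgdef, sq]
  set v : ℝ := ∫ y, g y * g y ∂μ with hv
  obtain ⟨hSint, hSval⟩ := aux_var_sum μ g hg hg2 hgmean n
  have hnR : (0 : ℝ) < n := by exact_mod_cast hn
  -- set inclusion
  have hsub : {x : Fin n → ℝ | t ≤ |(∑ i, x i) / n - m|}
      ⊆ {x : Fin n → ℝ | (n * t) ^ 2 ≤ (∑ i, g (x i)) ^ 2} := by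
    intro x hx
    have hS : ∑ i, g (x i) = (∑ i, x i) - n * m := by
      simp [hgdef, Finset.sum_sub_distrib, Finset.card_univ, mul_comm]
    have heq : (∑ i, x i) / n - m = (∑ i, g (x i)) / n := by
      rw [hS]; field_simp
    have hx' : t ≤ |∑ i, g (x i)| / n := by
      rw [Set.mem_setOf_eq, heq] at hx
      rwa [abs_div, abs_of_pos hnR] at hx
    have h2' : n * t ≤ |∑ i, g (x i)| := by
      rw [mul_comm]
      exact (le_div_iff₀ hnR).mp hx'
    have : (n * t) ^ 2 ≤ |∑ i, g (x i)| ^ 2 :=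
      pow_le_pow_left₀ (by positivity) h2' 2
    simpa [sq_abs] using this
  -- Markov
  have hmark := mul_meas_ge_le_integral_of_nonneg
    (μ := P) (f := fun x => (∑ i, g (x i)) ^ 2)
    (Filter.Eventually.of_forall fun x => sq_nonneg _) hSint ((n * t) ^ 2)
  rw [hSval] at hmark
  have hε : (0 : ℝ) < (n * t) ^ 2 := by positivity
  have htoReal : (P {x | (n * t) ^ 2 ≤ (∑ i, g (x i)) ^ 2}).toReal
      ≤ (n * v) / (n * t) ^ 2 := by
    exact (le_div_iff₀' hε).mpr hmark
  have hfrac : (n * v) / (n * t) ^ 2 = v / (n * t ^ 2) := by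
    rw [mul_pow]; field_simp
  calc P {x | t ≤ |(∑ i, x i) / n - m|}
      ≤ P {x | (n * t) ^ 2 ≤ (∑ i, g (x i)) ^ 2} := measure_mono hsub
    _ = ENNReal.ofReal ((P {x | (n * t) ^ 2 ≤ (∑ i, g (x i)) ^ 2}).toReal) :=
        (ENNReal.ofReal_toReal (measure_ne_top _ _)).symm
    _ ≤ ENNReal.ofReal ((∫ x, (x - m) ^ 2 ∂μ) / (n * t ^ 2)) := by
        apply ENNReal.ofReal_le_ofReal
        rw [hvv, ← hfrac]
        exact htoReal

lemma aux_tendsto (μ : ℕ → Measure ℝ) [∀ n, IsProbabilityMeasure (μ n)]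
    (m : ℕ → ℝ) (h1 : ∀ n, Integrable (fun x => x) (μ n))
    (h2 : ∀ n, Integrable (fun x => x ^ 2) (μ n))
    (hm : ∀ n, m n = ∫ x, x ∂(μ n))
    (t : ℕ → ℝ) (ht : ∀ n, 0 < t n)
    (V : ℝ) (hV : ∀ n, (∫ x, (x - m n) ^ 2 ∂(μ n)) ≤ V)
    (hgap : Tendsto (fun n : ℕ => Real.sqrt n * (2 * t n)) atTop atTop)
    (B : (n : ℕ) → Set (Fin n → ℝ))
    (hB : ∀ n, B n ⊆ {x | t n ≤ |(∑ i, x i) / n - m n|}) :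
    Tendsto (fun n => Measure.pi (fun _ : Fin n => μ n) (B n)) atTop (nhds 0) := by
  set d : ℕ → ℝ := fun n => Real.sqrt n * t n with hd
  have hdt : Tendsto d atTop atTop := by
    have h := hgap.atTop_div_const (two_pos)
    refine h.congr fun n => ?_
    rw [hd]; ring
  have hdsq : Tendsto (fun n => d n ^ 2) atTop atTop :=
    (tendsto_pow_atTop (two_ne_zero)).comp hdt
  have hc : Tendsto (fun n => V / d n ^ 2) atTop (nhds 0) :=
    Tendsto.div_atTop tendsto_const_nhds hdsq
  have hup : Tendsto (fun n => ENNReal.ofReal (V / d n ^ 2)) atTop (nhds 0) := by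
    have := ENNReal.tendsto_ofReal hc
    simpa using this
  apply tendsto_of_tendsto_of_tendsto_of_le_of_le' tendsto_const_nhds hup
  · exact Filter.Eventually.of_forall fun n => zero_le
  · filter_upwards [Filter.eventually_ge_atTop 1, hdsq.eventually_gt_atTop 0]
      with n hn hdpos
    have hn0 : 0 < n := hn
    have hnd : (n : ℝ) * t n ^ 2 = d n ^ 2 := by
      rw [hd, mul_pow, Real.sq_sqrt (Nat.cast_nonneg n)]
    calc Measure.pi (fun _ : Fin n => μ n) (B n)
        ≤ Measure.pi (fun _ : Fin n => μ n) {x | t n ≤ |(∑ i, x i) / n - m n|} :=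
          measure_mono (hB n)
      _ ≤ ENNReal.ofReal ((∫ x, (x - m n) ^ 2 ∂(μ n)) / (n * t n ^ 2)) :=
          aux_cheb (μ n) (h1 n) (h2 n) (m n) (hm n) n hn0 (t n) (ht n)
      _ ≤ ENNReal.ofReal (V / d n ^ 2) := by
          apply ENNReal.ofReal_le_ofReal
          rw [hnd]
          gcongr
          exact hV n

/-- Chebyshev-based distinguishability: if the single-observation means satisfy
`m0(n) < m1(n)` with `√n (m1(n) − m0(n)) → ∞` and the variances are uniformly bounded,
then the sample-mean threshold test at level `(m0(n)+m1(n))/2` drives both error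
probabilities to zero. -/
theorem stmt_11 (μ ν : ℕ → Measure ℝ)
    [∀ n, IsProbabilityMeasure (μ n)] [∀ n, IsProbabilityMeasure (ν n)]
    (m0 m1 v0 v1 : ℕ → ℝ)
    (hμ1 : ∀ n, Integrable (fun x => x) (μ n))
    (hν1 : ∀ n, Integrable (fun x => x) (ν n))
    (hμ2 : ∀ n, Integrable (fun x => x ^ 2) (μ n))
    (hν2 : ∀ n, Integrable (fun x => x ^ 2) (ν n))
    (hm0 : ∀ n, m0 n = ∫ x, x ∂(μ n)) (hm1 : ∀ n, m1 n = ∫ x, x ∂(ν n))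
    (hv0 : ∀ n, v0 n = ∫ x, (x - m0 n) ^ 2 ∂(μ n))
    (hv1 : ∀ n, v1 n = ∫ x, (x - m1 n) ^ 2 ∂(ν n))
    (hlt : ∀ n, m0 n < m1 n)
    (V : ℝ) (hV : ∀ n, v0 n ≤ V ∧ v1 n ≤ V)
    (hgap : Tendsto (fun n : ℕ => Real.sqrt n * (m1 n - m0 n)) atTop atTop)
    (A : (n : ℕ) → Set (Fin n → ℝ))
    (hA : ∀ n, A n = {x : Fin n → ℝ | (m0 n + m1 n) / 2 ≤ (∑ i, x i) / n}) :
    Tendsto (fun n => Measure.pi (fun _ : Fin n => μ n) (A n)) atTop (nhds 0) ∧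
    Tendsto (fun n => Measure.pi (fun _ : Fin n => ν n) ((A n)ᶜ)) atTop (nhds 0) := by
  have ht : ∀ n, 0 < (m1 n - m0 n) / 2 := fun n => by linarith [hlt n]
  have hgap' : Tendsto (fun n : ℕ => Real.sqrt n * (2 * ((m1 n - m0 n) / 2)))
      atTop atTop := hgap.congr fun n => by ring
  constructor
  · apply aux_tendsto μ m0 hμ1 hμ2 hm0 (fun n => (m1 n - m0 n) / 2) ht V
      (fun n => by rw [← hv0 n]; exact (hV n).1) hgap' A
    intro n x hx
    rw [hA n] at hx
    have h : (m1 n - m0 n) / 2 ≤ (∑ i, x i) / n - m0 n := by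
      have := hx; simp only [Set.mem_setOf_eq] at this; linarith
    exact le_abs.mpr (Or.inl h)
  · apply aux_tendsto ν m1 hν1 hν2 hm1 (fun n => (m1 n - m0 n) / 2) ht V
      (fun n => by rw [← hv1 n]; exact (hV n).2) hgap' (fun n => (A n)ᶜ)
    intro n x hx
    rw [hA n] at hx
    have hxlt : (∑ i, x i) / n < (m0 n + m1 n) / 2 := not_le.mp hx
    have h : (m1 n - m0 n) / 2 ≤ -((∑ i, x i) / n - m1 n) := by linarith
    exact le_abs.mpr (Or.inr h)
end
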